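/- Suppose the index set T of 𝒫 = {P_t : t ∈ T} is a bounded subset of ℝ^m equipped with a norm ‖·‖. If there exists a Borel measurable map F : ℝ → ℝ with E^P(|F|) < +∞ such that |f_s(x) − f_t(x)| ≤ ‖s − t‖ · F(x) for all s, t ∈ T and all x ∈ ℝ, then Ê̲_n^𝒫(f) is a strongly consistent estimator of E̲^𝒫(f), i.e., |Ê̲_n^𝒫(f) − E̲^𝒫(f)|* → 0 P^∞-almost surely. -/

import Mathlib

/-! Since every norm on `ℝ^m` is equivalent to the sup norm, `T` is totally bounded and the
hypothesis makes `t ↦ (1/n) ∑ₖ f_t(X_k)` and `t ↦ E^P(f_t)` Lipschitz for the sup distance,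
with constants a fixed multiple of the empirical mean of `|F|` and of its expectation. Hence the
infimum over `T` is an infimum over a countable dense subset, so the quantity is measurable and
is its own minimal cover. The strong law of large numbers at the points of that subset and for
`|F|`, together with the equi-Lipschitz bound, gives almost sure uniform convergence on `T`,
hence convergence of the infima. -/

open MeasureTheory Filter Topology ProbabilityTheory
open scoped ENNReal

noncomputable section

/-- The positive part of an extended real number, as an element of `ℝ≥0∞`. -/
def epos (x : EReal) : ℝ≥0∞ := if x = ⊤ then ⊤ else ENNReal.ofReal x.toReal

/-- The (possibly infinite) expectation `E(g) = ∫ g⁺ − ∫ g⁻` of an extended-real map. -/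
def eExp {Ω : Type*} [MeasurableSpace Ω] (μ : Measure Ω) (g : Ω → EReal) : EReal :=
  ((∫⁻ ω, epos (g ω) ∂μ : ℝ≥0∞) : EReal) - ((∫⁻ ω, epos (-(g ω)) ∂μ : ℝ≥0∞) : EReal)

/-- `E(g)` exists: at least one of `E(g⁺)`, `E(g⁻)` is finite. -/
def eExpExists {Ω : Type*} [MeasurableSpace Ω] (μ : Measure Ω) (g : Ω → EReal) : Prop :=
  (∫⁻ ω, epos (g ω) ∂μ) ≠ ⊤ ∨ (∫⁻ ω, epos (-(g ω)) ∂μ) ≠ ⊤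

/-- Outer expectation of an arbitrary extended-real map: the infimum of `E(g)` over all
measurable `g ≥ h` whose expectation exists. -/
def outerExp {Ω : Type*} [MeasurableSpace Ω] (μ : Measure Ω) (h : Ω → EReal) : EReal :=
  sInf {y : EReal | ∃ g : Ω → EReal,
    Measurable g ∧ (∀ ω, h ω ≤ g ω) ∧ eExpExists μ g ∧ eExp μ g = y}

/-- Inner expectation of an arbitrary extended-real map. -/
def innerExp {Ω : Type*} [MeasurableSpace Ω] (μ : Measure Ω) (h : Ω → EReal) : EReal :=
  - outerExp μ (fun ω => - h ω)

/-- `g` is a minimal measurable cover of `h` w.r.t. `μ`: it is measurable, dominates `h`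
pointwise, and is a.s. below any measurable map dominating `h` pointwise. -/
def IsMinMeasCover {Ω : Type*} [MeasurableSpace Ω] (μ : Measure Ω) (h g : Ω → EReal) : Prop :=
  Measurable g ∧ (∀ ω, h ω ≤ g ω) ∧
    ∀ g' : Ω → EReal, Measurable g' → (∀ ω, h ω ≤ g' ω) → ∀ᵐ ω ∂μ, g ω ≤ g' ω

/-- Absolute value on extended reals. -/
def eabs (x : EReal) : EReal := max x (-x)

open Set
open scoped NNReal

namespace Seminorm

variable {E : Type*} [NormedAddCommGroup E] [NormedSpace ℝ E] [FiniteDimensional ℝ E]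

theorem continuous_of_finiteDimensional (N : Seminorm ℝ E) : Continuous N :=
  N.convexOn.locallyLipschitz.continuous

theorem exists_pos_mul_norm_le (N : Seminorm ℝ E) (hN : ∀ v, N v = 0 → v = 0) :
    ∃ c > 0, ∀ v, c * ‖v‖ ≤ N v := by
  rcases subsingleton_or_nontrivial E with _ | _
  · exact ⟨1, one_pos, fun v => by simp [Subsingleton.elim v 0]⟩
  obtain ⟨v₀, hv₀, hmin⟩ := (isCompact_sphere (0 : E) 1).exists_isMinOn
    (NormedSpace.sphere_nonempty.mpr zero_le_one) N.continuous_of_finiteDimensional.continuousOn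
  have hv₀ : ‖v₀‖ = 1 := by simpa using hv₀
  have hpos : 0 < N v₀ := (apply_nonneg N v₀).lt_of_ne fun h =>
    by simp [hN v₀ h.symm] at hv₀
  refine ⟨N v₀, hpos, fun v => ?_⟩
  rcases eq_or_ne v 0 with rfl | hv
  · simp
  have hnorm : 0 < ‖v‖ := norm_pos_iff.mpr hv
  have hmem : ‖v‖⁻¹ • v ∈ Metric.sphere (0 : E) 1 := by
    simp [norm_smul, hnorm.ne']
  have := hmin hmem
  simp only [mem_ofPred_eq, map_smul_eq_mul, norm_inv, norm_norm] at this
  rwa [le_inv_mul_iff₀ hnorm, mul_comm] at this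

theorem totallyBounded_of_forall_le (N : Seminorm ℝ E) (hN : ∀ v, N v = 0 → v = 0)
    {T : Set E} {R : ℝ} (hR : ∀ t ∈ T, N t ≤ R) : TotallyBounded T := by
  obtain ⟨c, hc, hcN⟩ := N.exists_pos_mul_norm_le hN
  have hT : Bornology.IsBounded T := isBounded_iff_forall_norm_le.mpr ⟨R / c, fun t ht => by
    rw [le_div_iff₀ hc, mul_comm]
    exact (hcN t).trans (hR t ht)⟩
  exact hT.isCompact_closure.totallyBounded.subset subset_closure

theorem exists_abs_sub_le_dist_mul (N : Seminorm ℝ E) {α : Type*} {T : Set E} {g : E → α → ℝ}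
    {F : α → ℝ} (h : ∀ s ∈ T, ∀ t ∈ T, ∀ x, |g s x - g t x| ≤ N (s - t) * F x) :
    ∃ C, ∀ (s t : T) x, |g s x - g t x| ≤ dist s t * (C * |F x|) := by
  obtain ⟨C, -, hC⟩ := N.bound_of_continuous_normedSpace N.continuous_of_finiteDimensional
  refine ⟨C, fun s t x => ?_⟩
  calc |g s x - g t x|
    _ ≤ N (s - t) * |F x| := (h s s.2 t t.2 x).trans (by gcongr; exact le_abs_self _)
    _ ≤ C * dist s t * |F x| := by
      gcongr
      rw [Subtype.dist_eq, dist_eq_norm]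
      exact hC _
    _ = dist s t * (C * |F x|) := by ring

end Seminorm

theorem TotallyBounded.univ_subtype {X : Type*} [UniformSpace X] {T : Set X}
    (hT : TotallyBounded T) : TotallyBounded (univ : Set T) := by
  rw [← Subtype.coe_preimage_self]
  exact totallyBounded_preimage (isUniformInducing_val T) hT

theorem LipschitzWith.bddBelow_range {X : Type*} [PseudoMetricSpace X]
    (hX : Bornology.IsBounded (univ : Set X)) {K : ℝ≥0} {f : X → ℝ} (hf : LipschitzWith K f) :
    BddBelow (range f) := by
  simpa only [image_univ] using (hf.isBounded_image hX).bddBelow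

def empiricalMean {α : Type*} (g : α → ℝ) (n : ℕ) (ω : ℕ → α) : ℝ :=
  (n : ℝ)⁻¹ * ∑ k ∈ Finset.range n, g (ω k)

section EmpiricalMean

variable {α : Type*}

theorem abs_empiricalMean_sub_le {g h G : α → ℝ} {c : ℝ} (hgh : ∀ x, |g x - h x| ≤ c * G x)
    (n : ℕ) (ω : ℕ → α) :
    |empiricalMean g n ω - empiricalMean h n ω| ≤ c * empiricalMean G n ω := by
  unfold empiricalMean
  rw [← mul_sub, ← Finset.sum_sub_distrib, abs_mul, abs_of_nonneg (by positivity),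
    mul_left_comm, Finset.mul_sum]
  gcongr
  exact (Finset.abs_sum_le_sum_abs _ _).trans (Finset.sum_le_sum fun k _ => hgh (ω k))

variable [MeasurableSpace α]

theorem measurable_empiricalMean {g : α → ℝ} (hg : Measurable g) (n : ℕ) :
    Measurable (empiricalMean g n) :=
  (Finset.measurable_sum _ fun k _ => hg.comp (measurable_pi_apply k)).const_mul _

theorem ae_tendsto_empiricalMean {μ : Measure (ℕ → α)} {P : Measure α}
    (hmap : ∀ k, μ.map (fun ω => ω k) = P) (hind : iIndepFun (fun k (ω : ℕ → α) => ω k) μ)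
    {g : α → ℝ} (hg : Measurable g) (hgi : Integrable g P) :
    ∀ᵐ ω ∂μ, Tendsto (fun n => empiricalMean g n ω) atTop (𝓝 (∫ x, g x ∂P)) := by
  have hcoord : ∀ k, IdentDistrib (fun ω : ℕ → α => ω k) id μ P := fun k =>
    ⟨(measurable_pi_apply k).aemeasurable, aemeasurable_id, by rw [hmap k, Measure.map_id]⟩
  have hident : ∀ k, IdentDistrib (fun ω : ℕ → α => g (ω k)) (fun ω => g (ω 0)) μ μ := fun k =>
    ((hcoord k).trans (hcoord 0).symm).comp hg
  have hg0 : IdentDistrib (fun ω : ℕ → α => g (ω 0)) g μ P := (hcoord 0).comp hg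
  have hlaw := strong_law_ae_real (fun k (ω : ℕ → α) => g (ω k)) (hg0.integrable_iff.mpr hgi)
    (fun i j hij => (hind.indepFun hij).comp hg hg) hident
  rw [hg0.integral_eq] at hlaw
  filter_upwards [hlaw] with ω hω
  simpa only [empiricalMean, div_eq_inv_mul] using hω

end EmpiricalMean

section LipschitzFamily

variable {X α : Type*} [PseudoMetricSpace X] {g : X → α → ℝ} {G : α → ℝ}

theorem lipschitzWith_empiricalMean (hg : ∀ s t x, |g s x - g t x| ≤ dist s t * G x)
    (n : ℕ) (ω : ℕ → α) :
    LipschitzWith (empiricalMean G n ω).toNNReal fun t => empiricalMean (g t) n ω :=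
  LipschitzWith.of_dist_le' fun s t => by
    rw [Real.dist_eq, mul_comm]
    exact abs_empiricalMean_sub_le (hg s t) n ω

theorem lipschitzWith_integral [MeasurableSpace α] {P : Measure α}
    (hg : ∀ s t x, |g s x - g t x| ≤ dist s t * G x) (hgi : ∀ t, Integrable (g t) P)
    (hGi : Integrable G P) :
    LipschitzWith (∫ x, G x ∂P).toNNReal fun t => ∫ x, g t x ∂P :=
  LipschitzWith.of_dist_le' fun s t => by
    rw [Real.dist_eq, ← integral_sub (hgi s) (hgi t), mul_comm, ← integral_const_mul]
    exact (abs_integral_le_integral_abs).trans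
      (integral_mono ((hgi s).sub (hgi t)).abs (hGi.const_mul _) (hg s t))

end LipschitzFamily

theorem abs_ciInf_sub_ciInf_le {ι : Type*} [Nonempty ι] {f g : ι → ℝ}
    (hf : BddBelow (range f)) (hg : BddBelow (range g)) {c : ℝ} (h : ∀ i, |f i - g i| ≤ c) :
    |(⨅ i, f i) - ⨅ i, g i| ≤ c := by
  refine abs_sub_le_iff.mpr ⟨?_, ?_⟩
  · have : (⨅ i, f i) - c ≤ ⨅ i, g i := le_ciInf fun i => by
      linarith [ciInf_le hf i, (abs_le.mp (h i)).2]
    linarith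
  · have : (⨅ i, g i) - c ≤ ⨅ i, f i := le_ciInf fun i => by
      linarith [ciInf_le hg i, (abs_le.mp (h i)).1]
    linarith

theorem TendstoUniformly.tendsto_ciInf {ι κ : Type*} [Nonempty κ] {l : Filter ι}
    {F : ι → κ → ℝ} {f : κ → ℝ} (h : TendstoUniformly F f l)
    (hF : ∀ i, BddBelow (range (F i))) (hf : BddBelow (range f)) :
    Tendsto (fun i => ⨅ x, F i x) l (𝓝 (⨅ x, f x)) := by
  refine Metric.tendsto_nhds.mpr fun ε hε => ?_
  filter_upwards [Metric.tendstoUniformly_iff.mp h (ε / 2) (half_pos hε)] with i hi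
  rw [Real.dist_eq]
  refine (abs_ciInf_sub_ciInf_le (hF i) hf fun x => ?_).trans_lt (half_lt_self hε)
  rw [abs_sub_comm]
  exact (hi x).le

theorem tendstoUniformly_of_lipschitzWith_of_dense {X ι : Type*} [PseudoMetricSpace X]
    (hX : TotallyBounded (univ : Set X)) {D : Set X} (hD : Dense D) {l : Filter ι}
    {F : ι → X → ℝ} {f : X → ℝ} {K : ι → ℝ≥0} {L : ℝ≥0} (hK : ∀ᶠ i in l, K i ≤ L)
    (hF : ∀ i, LipschitzWith (K i) (F i)) (hf : LipschitzWith L f)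
    (hlim : ∀ x ∈ D, Tendsto (fun i => F i x) l (𝓝 (f x))) :
    TendstoUniformly F f l := by
  refine Metric.tendstoUniformly_iff.mpr fun ε hε => ?_
  set δ : ℝ := ε / (8 * (L + 1)) with hδ_def
  have hδ : 0 < δ := by positivity
  obtain ⟨s, hs, hcover⟩ := Metric.totallyBounded_iff.mp hX δ hδ
  choose! d hdD hd using fun y => hD.exists_dist_lt y hδ
  have hnet : ∀ᶠ i in l, ∀ y ∈ s, dist (F i (d y)) (f (d y)) < ε / 2 :=
    hs.eventually_all.mpr fun y _ => Metric.tendsto_nhds.mp (hlim _ (hdD y)) _ (half_pos hε)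
  filter_upwards [hK, hnet] with i hKi hi x
  obtain ⟨y, hy, hxy⟩ := mem_iUnion₂.mp (hcover (mem_univ x))
  have hxd : dist x (d y) < 2 * δ := by
    linarith [dist_triangle x y (d y), Metric.mem_ball.mp hxy, hd y]
  have hLδ : (L : ℝ) * (2 * δ) ≤ ε / 4 := by
    rw [hδ_def]; field_simp; nlinarith [L.coe_nonneg]
  have hf_near : dist (f x) (f (d y)) ≤ ε / 4 := calc
    _ ≤ L * dist x (d y) := hf.dist_le_mul x (d y)
    _ ≤ L * (2 * δ) := by gcongr
    _ ≤ ε / 4 := hLδ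
  have hF_near : dist (F i x) (F i (d y)) ≤ ε / 4 := calc
    _ ≤ K i * dist x (d y) := (hF i).dist_le_mul x (d y)
    _ ≤ L * (2 * δ) := by gcongr
    _ ≤ ε / 4 := hLδ
  linarith [dist_triangle4 (f x) (f (d y)) (F i (d y)) (F i x), hi y hy,
    dist_comm (f (d y)) (F i (d y)), dist_comm (F i x) (F i (d y))]

theorem measurable_iInf_of_continuous {ι Ω α : Type*} [TopologicalSpace ι]
    [TopologicalSpace.SeparableSpace ι] [MeasurableSpace Ω] [TopologicalSpace α]
    [MeasurableSpace α] [BorelSpace α] [ConditionallyCompleteLinearOrder α] [OrderTopology α]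
    [SecondCountableTopology α] {g : ι → Ω → α} (hm : ∀ i, Measurable (g i))
    (hc : ∀ ω, Continuous fun i => g i ω) :
    Measurable fun ω => ⨅ i, g i ω := by
  obtain ⟨D, hDc, hD⟩ := TopologicalSpace.exists_countable_dense ι
  have := hDc.to_subtype
  simp_rw [← hD.ciInf' (hc _)]
  exact Measurable.iInf fun d => hm d

section UniformLaw

variable {X α : Type*} [PseudoMetricSpace X] [MeasurableSpace α] {g : X → α → ℝ} {G : α → ℝ}

theorem measurable_iInf_empiricalMean [TopologicalSpace.SeparableSpace X]
    (hg : ∀ s t x, |g s x - g t x| ≤ dist s t * G x) (hgm : ∀ t, Measurable (g t)) (n : ℕ) :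
    Measurable fun ω => ⨅ t, empiricalMean (g t) n ω :=
  measurable_iInf_of_continuous (fun t => measurable_empiricalMean (hgm t) n)
    fun ω => (lipschitzWith_empiricalMean hg n ω).continuous

theorem ae_tendsto_iInf_empiricalMean [Nonempty X] (hX : TotallyBounded (univ : Set X))
    {μ : Measure (ℕ → α)} {P : Measure α} (hmap : ∀ k, μ.map (fun ω => ω k) = P)
    (hind : iIndepFun (fun k (ω : ℕ → α) => ω k) μ)
    (hg : ∀ s t x, |g s x - g t x| ≤ dist s t * G x) (hgm : ∀ t, Measurable (g t))
    (hgi : ∀ t, Integrable (g t) P) (hGm : Measurable G) (hGi : Integrable G P) :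
    ∀ᵐ ω ∂μ, Tendsto (fun n => ⨅ t, empiricalMean (g t) n ω) atTop
      (𝓝 (⨅ t, ∫ x, g t x ∂P)) := by
  have := TopologicalSpace.isSeparable_univ_iff.mp hX.isSeparable
  obtain ⟨D, hDc, hD⟩ := TopologicalSpace.exists_countable_dense X
  have := hDc.to_subtype
  have hlaw : ∀ᵐ ω ∂μ, (∀ d : D, Tendsto (fun n => empiricalMean (g d) n ω) atTop
      (𝓝 (∫ x, g d x ∂P))) ∧ Tendsto (fun n => empiricalMean G n ω) atTop (𝓝 (∫ x, G x ∂P)) :=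
    (ae_all_iff.mpr fun d : D => ae_tendsto_empiricalMean hmap hind (hgm d) (hgi d)).and
      (ae_tendsto_empiricalMean hmap hind hGm hGi)
  filter_upwards [hlaw] with ω ⟨hD_lim, hG_lim⟩
  have ha := lipschitzWith_integral hg hgi hGi
  refine TendstoUniformly.tendsto_ciInf ?_
    (fun n => (lipschitzWith_empiricalMean hg n ω).bddBelow_range hX.isBounded)
    (ha.bddBelow_range hX.isBounded)
  exact tendstoUniformly_of_lipschitzWith_of_dense hX hD (L := (∫ x, G x ∂P + 1).toNNReal)
    ((hG_lim.eventually_lt_const (lt_add_one _)).mono fun n hn =>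
      Real.toNNReal_le_toNNReal hn.le)
    (lipschitzWith_empiricalMean hg · ω) (ha.weaken (Real.toNNReal_le_toNNReal (lt_add_one _).le))
    fun d hd => hD_lim ⟨d, hd⟩

end UniformLaw

theorem EReal.coe_ciInf {ι : Type*} [Nonempty ι] {f : ι → ℝ} (hf : BddBelow (range f)) :
    ((⨅ i, f i : ℝ) : EReal) = ⨅ i, (f i : EReal) :=
  Monotone.map_ciInf_of_continuousAt continuous_coe_real_ereal.continuousAt
    EReal.coe_strictMono.monotone hf

theorem eabs_coe (x : ℝ) : eabs (x : EReal) = (|x| : ℝ) := by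
  rw [eabs, abs_eq_max_neg, ← EReal.coe_neg]
  exact (EReal.coe_strictMono.monotone.map_max).symm

theorem eabs_iInf_coe_sub_iInf_coe {ι : Type*} [Nonempty ι] {f g : ι → ℝ}
    (hf : BddBelow (range f)) (hg : BddBelow (range g)) :
    eabs ((⨅ i, (f i : EReal)) - ⨅ i, (g i : EReal)) = ((|(⨅ i, f i) - ⨅ i, g i| : ℝ) : EReal) := by
  rw [← EReal.coe_ciInf hf, ← EReal.coe_ciInf hg, ← EReal.coe_sub, eabs_coe]

theorem isMinMeasCover_self {Ω : Type*} [MeasurableSpace Ω] (μ : Measure Ω) {g : Ω → EReal}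
    (hg : Measurable g) : IsMinMeasCover μ g g :=
  ⟨hg, fun _ => le_rfl, fun _ _ hg' => ae_of_all _ hg'⟩

theorem lipschitz_consistency_general
    {m : ℕ} (N : Seminorm ℝ (Fin m → ℝ)) (hN : ∀ v, N v = 0 → v = 0)
    (T : Set (Fin m → ℝ)) (hTne : T.Nonempty)
    (hTbdd : ∃ R : ℝ, ∀ t ∈ T, N t ≤ R)
    (Pt : (Fin m → ℝ) → Measure ℝ)
    (P : Measure ℝ)
    (f : ℝ → ℝ)
    (ft : (Fin m → ℝ) → ℝ → ℝ)
    (hftm : ∀ t ∈ T, Measurable (ft t)) (hfti : ∀ t ∈ T, Integrable (ft t) P)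
    (hfte : ∀ t ∈ T, ∫ x, ft t x ∂P = ∫ x, f x ∂(Pt t))
    (F : ℝ → ℝ) (hFm : Measurable F) (hFi : Integrable F P)
    (hlip : ∀ s ∈ T, ∀ t ∈ T, ∀ x : ℝ, |ft s x - ft t x| ≤ N (s - t) * F x)
    (μ : Measure (ℕ → ℝ))
    (hmap : ∀ k : ℕ, μ.map (fun ω => ω k) = P)
    (hind : iIndepFun (fun k (ω : ℕ → ℝ) => ω k) μ) :
    ∃ H : ℕ → (ℕ → ℝ) → EReal,
      (∀ n : ℕ, IsMinMeasCover μ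
        (fun ω => eabs ((⨅ t : T, (((n : ℝ)⁻¹ *
            ∑ k ∈ Finset.range n, ft t (ω k) : ℝ) : EReal)) -
          ⨅ t : T, ((∫ x, f x ∂(Pt t) : ℝ) : EReal))) (H n)) ∧
      ∀ᵐ ω ∂μ, Tendsto (fun n : ℕ => H n ω) atTop (𝓝 (0 : EReal)) := by
  have : Nonempty T := hTne.to_subtype
  obtain ⟨R, hR⟩ := hTbdd
  have hT : TotallyBounded (univ : Set T) := (N.totallyBounded_of_forall_le hN hR).univ_subtype
  obtain ⟨C, hlip'⟩ := N.exists_abs_sub_le_dist_mul hlip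
  have hmean : ∀ t : T, ∫ x, f x ∂(Pt t) = ∫ x, ft t x ∂P := fun t => (hfte t t.2).symm
  refine ⟨fun n ω => (|(⨅ t : T, empiricalMean (ft t) n ω) - ⨅ t : T, ∫ x, ft t x ∂P| : ℝ),
    fun n => ?_, ?_⟩
  · convert isMinMeasCover_self μ
      ((measurable_iInf_empiricalMean hlip' (fun t => hftm t t.2) n).sub_const _).abs.coe_real_ereal
      using 2
    simp only [hmean]
    exact eabs_iInf_coe_sub_iInf_coe
      ((lipschitzWith_empiricalMean hlip' n _).bddBelow_range hT.isBounded)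
      ((lipschitzWith_integral hlip' (fun t => hfti t t.2) (hFi.abs.const_mul C)).bddBelow_range
        hT.isBounded)
  · filter_upwards [ae_tendsto_iInf_empiricalMean hT hmap hind hlip' (fun t => hftm t t.2)
      (fun t => hfti t t.2) (hFm.abs.const_mul C) (hFi.abs.const_mul C)] with ω hω
    simpa using EReal.tendsto_coe.mpr (hω.sub_const (⨅ t : T, ∫ x, ft t x ∂P)).abs

/-- If the index set `T ⊆ ℝ^m` (with a norm `‖·‖`) is bounded and there is a
Borel measurable `F : ℝ → ℝ` with `E^P(|F|) < +∞` such that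
`|f_s(x) − f_t(x)| ≤ ‖s − t‖·F(x)` for all `s, t ∈ T` and `x ∈ ℝ`, then `Ê̲_n^𝒫(f)` is a
strongly consistent estimator of `E̲^𝒫(f)`: some minimal measurable covers of
`|Ê̲_n^𝒫(f) − E̲^𝒫(f)|` converge to `0` `P^∞`-a.s. -/
theorem lipschitz_consistency
    {m : ℕ} (N : Seminorm ℝ (Fin m → ℝ)) (hN : ∀ v, N v = 0 → v = 0)
    (T : Set (Fin m → ℝ)) (hTne : T.Nonempty)
    (hTbdd : ∃ R : ℝ, ∀ t ∈ T, N t ≤ R)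
    (Pt : (Fin m → ℝ) → Measure ℝ) (hPt : ∀ t ∈ T, IsProbabilityMeasure (Pt t))
    (P : Measure ℝ) [IsProbabilityMeasure P]
    (f : ℝ → ℝ) (hf : Measurable f)
    (hfint : ∀ t ∈ T, Integrable f (Pt t))
    (hsup : BddAbove ((fun t => ∫ x, |f x| ∂(Pt t)) '' T))
    (ft : (Fin m → ℝ) → ℝ → ℝ)
    (hftm : ∀ t ∈ T, Measurable (ft t)) (hfti : ∀ t ∈ T, Integrable (ft t) P)
    (hfte : ∀ t ∈ T, ∫ x, ft t x ∂P = ∫ x, f x ∂(Pt t))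
    (hftea : ∀ t ∈ T, ∫ x, |ft t x| ∂P = ∫ x, |f x| ∂(Pt t))
    (F : ℝ → ℝ) (hFm : Measurable F) (hFi : Integrable F P)
    (hlip : ∀ s ∈ T, ∀ t ∈ T, ∀ x : ℝ, |ft s x - ft t x| ≤ N (s - t) * F x)
    (μ : Measure (ℕ → ℝ)) [IsProbabilityMeasure μ]
    (hmap : ∀ k : ℕ, μ.map (fun ω => ω k) = P)
    (hind : iIndepFun (fun k (ω : ℕ → ℝ) => ω k) μ) :
    ∃ H : ℕ → (ℕ → ℝ) → EReal,
      (∀ n : ℕ, IsMinMeasCover μ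
        (fun ω => eabs ((⨅ t : T, (((n : ℝ)⁻¹ *
            ∑ k ∈ Finset.range n, ft t (ω k) : ℝ) : EReal)) -
          ⨅ t : T, ((∫ x, f x ∂(Pt t) : ℝ) : EReal))) (H n)) ∧
      ∀ᵐ ω ∂μ, Tendsto (fun n : ℕ => H n ω) atTop (𝓝 (0 : EReal)) :=
  lipschitz_consistency_general N hN T hTne hTbdd Pt P f ft hftm hfti hfte F hFm hFi hlip μ hmap
    hind
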